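/- arXiv:nlin/0005046 — 3 statements merged into one kernel-verified Lean document; each statement's English description precedes it below -/
import Mathlib

section
/- Let b : ℝⁿ → ℝⁿ be smooth with components bᵢ satisfying ∂ⱼbᵢ + ∂ᵢbⱼ = 0 for i ≠ j, and suppose ∂ᵢbᵢ = 3 ∂ᵢV for a smooth function V : ℝⁿ → ℝ. Then for i ≠ j, (∂ᵢ + ∂ⱼ)(∂ᵢ bⱼ) = 0, i.e. ∂ᵢbⱼ depends only on the difference qᵢ - qⱼ. -/
/-- Partial derivative of `f : ℝⁿ → ℝ` in the `i`-th coordinate direction. -/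
noncomputable def pd {n : ℕ} (i : Fin n) (f : (Fin n → ℝ) → ℝ) (q : Fin n → ℝ) : ℝ :=
  fderiv ℝ f q (Pi.single i 1)

lemma fderiv_pd {n : ℕ} {f : (Fin n → ℝ) → ℝ} (hf : ContDiff ℝ 2 f) (i : Fin n)
    (q w : Fin n → ℝ) :
    fderiv ℝ (pd i f) q w = fderiv ℝ (fderiv ℝ f) q w (Pi.single i 1) := by
  have hdf : DifferentiableAt ℝ (fderiv ℝ f) q :=
    ((hf.fderiv_right (m := 1) le_rfl).differentiable one_ne_zero).differentiableAt
  have h := fderiv_clm_apply (c := fderiv ℝ f) (u := fun _ => Pi.single i 1)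
    hdf (differentiableAt_const _)
  rw [show pd i f = fun p => fderiv ℝ f p (Pi.single i 1) from rfl, h]
  simp

lemma pd_differentiable {n : ℕ} {f : (Fin n → ℝ) → ℝ} (hf : ContDiff ℝ 2 f) (i : Fin n)
    (q : Fin n → ℝ) : DifferentiableAt ℝ (pd i f) q := by
  have hdf : Differentiable ℝ (fderiv ℝ f) :=
    (hf.fderiv_right (m := 1) le_rfl).differentiable one_ne_zero
  exact ((ContinuousLinearMap.apply ℝ ℝ (Pi.single i 1)).differentiable.comp hdf) q

lemma d2_symm {n : ℕ} {f : (Fin n → ℝ) → ℝ} (hf : ContDiff ℝ 2 f) (q v w : Fin n → ℝ) :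
    fderiv ℝ (fderiv ℝ f) q v w = fderiv ℝ (fderiv ℝ f) q w v :=
  (hf.contDiffAt.isSymmSndFDerivAt (by simp [minSmoothness_of_isRCLikeNormedField])) v w

theorem stmt1 {n : ℕ} (b : Fin n → (Fin n → ℝ) → ℝ) (V : (Fin n → ℝ) → ℝ)
    (hb : ∀ i, ContDiff ℝ 2 (b i)) (hV : ContDiff ℝ 2 V)
    (h1 : ∀ i j : Fin n, i ≠ j → ∀ q, pd j (b i) q + pd i (b j) q = 0)
    (h2 : ∀ i q, pd i (b i) q = 3 * pd i V q) :
    ∀ i j : Fin n, i ≠ j → ∀ q,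
      fderiv ℝ (pd i (b j)) q (Pi.single i 1 + Pi.single j 1) = 0 := by
  intro i j hij q
  set ei : Fin n → ℝ := Pi.single i 1
  set ej : Fin n → ℝ := Pi.single j 1
  -- second derivative abbreviation
  set D : ((Fin n → ℝ) → ℝ) → (Fin n → ℝ) → (Fin n → ℝ) → (Fin n → ℝ) → ℝ :=
    fun f q v w => fderiv ℝ (fderiv ℝ f) q v w with hD
  -- derivative of h1
  have h1' : ∀ w, D (b i) q w ej = - D (b j) q w ei := by
    intro w
    have hfun : pd j (b i) = fun q => - pd i (b j) q := by
      funext q; linarith [h1 i j hij q]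
    have := fderiv_pd (hb i) j q w
    rw [hfun] at this
    rw [fderiv_fun_neg] at this
    simp only [ContinuousLinearMap.neg_apply] at this
    rw [fderiv_pd (hb j) i q w] at this
    simp [hD, ← this]; exact this.symm
  -- derivative of h2
  have h2' : ∀ (k : Fin n) w, D (b k) q w (Pi.single k 1) = 3 * D V q w (Pi.single k 1) := by
    intro k w
    have hfun : pd k (b k) = fun q => 3 * pd k V q := by funext q; exact h2 k q
    have := fderiv_pd (hb k) k q w
    rw [hfun, fderiv_const_mul (pd_differentiable hV k q)] at this
    simp only [ContinuousLinearMap.smul_apply, smul_eq_mul] at this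
    rw [fderiv_pd hV k q w] at this
    simp [hD, ← this]
  have key : fderiv ℝ (pd i (b j)) q (ei + ej) = D (b j) q ei ei + D (b j) q ej ei := by
    rw [fderiv_pd (hb j) i q (ei + ej)]
    simp [hD]; rfl
  rw [key]
  have e1 : D (b j) q ei ei = - D (b i) q ei ej := by linarith [h1' ei]
  have e2 : D (b i) q ei ej = D (b i) q ej ei := d2_symm (hb i) q ei ej
  have e3 : D (b i) q ej ei = 3 * D V q ej ei := h2' i ej
  have e4 : D (b j) q ej ei = D (b j) q ei ej := d2_symm (hb j) q ej ei
  have e5 : D (b j) q ei ej = 3 * D V q ei ej := h2' j ei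
  have e6 : D V q ei ej = D V q ej ei := d2_symm hV q ei ej
  linarith
end

section
/- Let W : ℝ → ℝ be an even differentiable function on ℝ \ {0} with derivative F (so F is odd). For distinct real numbers qᵢ, qⱼ, qₖ, the quantity A := ∂/∂qᵢ (W(qⱼ-qᵢ)W(qₖ-qᵢ)) + ∂/∂qⱼ (W(qᵢ-qⱼ)W(qₖ-qⱼ)) + ∂/∂qₖ (W(qᵢ-qₖ)W(qⱼ-qₖ)) equals the 3×3 determinant det [[1,1,1],[W(qᵢ-qⱼ), W(qⱼ-qₖ), W(qₖ-qᵢ)],[F(qᵢ-qⱼ), F(qⱼ-qₖ), F(qₖ-qᵢ)]]. -/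
theorem stmt3 (W F : ℝ → ℝ)
    (hWeven : ∀ x : ℝ, x ≠ 0 → W (-x) = W x)
    (hW' : ∀ x : ℝ, x ≠ 0 → HasDerivAt W (F x) x)
    (qi qj qk : ℝ) (hij : qi ≠ qj) (hjk : qj ≠ qk) (hik : qi ≠ qk) :
    deriv (fun t => W (qj - t) * W (qk - t)) qi
      + deriv (fun t => W (qi - t) * W (qk - t)) qj
      + deriv (fun t => W (qi - t) * W (qj - t)) qk
      = Matrix.det !![(1 : ℝ), 1, 1;
          W (qi - qj), W (qj - qk), W (qk - qi);
          F (qi - qj), F (qj - qk), F (qk - qi)] := by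
  -- F is odd
  have hFodd : ∀ x : ℝ, x ≠ 0 → F (-x) = -F x := by
    intro x hx
    have h1 : HasDerivAt (fun y : ℝ => W (-y)) (F (-x) * (-1)) x :=
      (hW' (-x) (neg_ne_zero.mpr hx)).comp x ((hasDerivAt_neg x))
    have h2 : HasDerivAt W (-F (-x)) x := by
      have heq : (fun y : ℝ => W (-y)) =ᶠ[nhds x] W := by
        filter_upwards [isOpen_compl_singleton.mem_nhds hx] with y hy
        exact hWeven y hy
      have := h1.congr_of_eventuallyEq heq.symm
      simpa using this
    have := h2.unique (hW' x hx)
    linarith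
  have hsub : ∀ a b : ℝ, a ≠ b → HasDerivAt (fun t => W (a - t)) (-F (a - b)) b := by
    intro a b hab
    have h := (hW' (a - b) (sub_ne_zero.mpr hab)).comp b
      ((hasDerivAt_id b).const_sub a)
    simpa [mul_comm, Function.comp_def] using h
  have d1 : deriv (fun t => W (qj - t) * W (qk - t)) qi
      = -F (qj - qi) * W (qk - qi) + W (qj - qi) * (-F (qk - qi)) :=
    ((hsub qj qi hij.symm).mul (hsub qk qi (Ne.symm hik))).deriv
  have d2 : deriv (fun t => W (qi - t) * W (qk - t)) qj
      = -F (qi - qj) * W (qk - qj) + W (qi - qj) * (-F (qk - qj)) :=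
    ((hsub qi qj hij).mul (hsub qk qj hjk.symm)).deriv
  have d3 : deriv (fun t => W (qi - t) * W (qj - t)) qk
      = -F (qi - qk) * W (qj - qk) + W (qi - qk) * (-F (qj - qk)) :=
    ((hsub qi qk hik).mul (hsub qj qk hjk)).deriv
  have eW : ∀ a b : ℝ, a ≠ b → W (b - a) = W (a - b) := by
    intro a b hab
    have := hWeven (a - b) (sub_ne_zero.mpr hab)
    simpa [neg_sub] using this
  have eF : ∀ a b : ℝ, a ≠ b → F (b - a) = -F (a - b) := by
    intro a b hab
    have := hFodd (a - b) (sub_ne_zero.mpr hab)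
    simpa [neg_sub] using this
  rw [d1, d2, d3, Matrix.det_fin_three,
    eW qi qj hij, eF qi qj hij, eW qj qk hjk, eF qj qk hjk,
    eW qi qk hik, eF qi qk hik]
  simp [Matrix.cons_val_zero, Matrix.cons_val_one]
  ring
end

section
/- Let d : Fin n → Fin n → Fin n → ℝ (n ≥ 4) assign to each triple of distinct indices a smooth function d_{ijk}(q) on ℝⁿ, fully symmetric in (i,j,k), such that ∂ₗ d_{ijk} = 0 for l ∉ {i,j,k} and ∂ⱼ d_{ik} + ∂ₖ d_{ij} + ∂ᵢ d_{ijk} = 0 with ∂ᵢ d_{ij} = ∂ⱼ d_{ij} = 0. Then ∂ᵢ² d_{ijk} = 0, so d_{ijk} is an affine function of qᵢ (with the other variables fixed). -/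
lemma pd_pd_eq_snd {n : ℕ} (f : (Fin n → ℝ) → ℝ) (hf : ContDiff ℝ 2 f)
    (a b : Fin n) (q : Fin n → ℝ) :
    pd a (pd b f) q = fderiv ℝ (fderiv ℝ f) q (Pi.single a 1) (Pi.single b 1) := by
  have hdf : DifferentiableAt ℝ (fderiv ℝ f) q :=
    ((hf.fderiv_right (m := 1) (by norm_num)).differentiable one_ne_zero) q
  have : fderiv ℝ (fun y => fderiv ℝ f y (Pi.single b 1)) q =
      ((fderiv ℝ f q).comp (fderiv ℝ (fun _ : Fin n → ℝ => Pi.single b 1) q)) +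
        (fderiv ℝ (fderiv ℝ f) q).flip (Pi.single b 1) :=
    fderiv_clm_apply hdf (differentiableAt_const _)
  have hpdb : pd b f = fun y => fderiv ℝ f y (Pi.single b 1) := rfl
  rw [pd, hpdb, this]
  simp

lemma pd_swap {n : ℕ} (f : (Fin n → ℝ) → ℝ) (hf : ContDiff ℝ 2 f)
    (a b : Fin n) (q : Fin n → ℝ) :
    pd a (pd b f) q = pd b (pd a f) q := by
  rw [pd_pd_eq_snd f hf, pd_pd_eq_snd f hf]
  exact (hf.contDiffAt.isSymmSndFDerivAt (by simp [minSmoothness_of_isRCLikeNormedField])) _ _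

theorem stmt12 {n : ℕ} (hn : 4 ≤ n)
    (d3 : Fin n → Fin n → Fin n → (Fin n → ℝ) → ℝ)
    (d2 : Fin n → Fin n → (Fin n → ℝ) → ℝ)
    (hsmooth3 : ∀ i j k, ContDiff ℝ 2 (d3 i j k))
    (hsmooth2 : ∀ i j, ContDiff ℝ 2 (d2 i j))
    (hsymm : ∀ i j k, d3 i j k = d3 j i k ∧ d3 i j k = d3 i k j)
    (hl : ∀ i j k l : Fin n, i ≠ j → j ≠ k → i ≠ k →
      l ≠ i → l ≠ j → l ≠ k → ∀ q, pd l (d3 i j k) q = 0)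
    (hrel : ∀ i j k : Fin n, i ≠ j → j ≠ k → i ≠ k →
      ∀ q, pd j (d2 i k) q + pd k (d2 i j) q + pd i (d3 i j k) q = 0)
    (h2a : ∀ i j : Fin n, i ≠ j → ∀ q, pd i (d2 i j) q = 0)
    (h2b : ∀ i j : Fin n, i ≠ j → ∀ q, pd j (d2 i j) q = 0) :
    ∀ i j k : Fin n, i ≠ j → j ≠ k → i ≠ k →
      ∀ q, pd i (pd i (d3 i j k)) q = 0 := by
  intro i j k hij hjk hik q
  -- pd i (d3 i j k) = fun q => -(pd j (d2 i k) q + pd k (d2 i j) q)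
  have key : pd i (d3 i j k) = fun q => -(pd j (d2 i k) q) - (pd k (d2 i j) q) := by
    funext q
    have := hrel i j k hij hjk hik q
    linarith
  rw [key]
  -- differentiability of the pieces
  have hd1 : Differentiable ℝ (pd j (d2 i k)) := by
    have h := ((hsmooth2 i k).fderiv_right (m := 1) (by norm_num)).differentiable one_ne_zero
    exact fun x => (h x).clm_apply (differentiableAt_const _)
  have hd2 : Differentiable ℝ (pd k (d2 i j)) := by
    have h := ((hsmooth2 i j).fderiv_right (m := 1) (by norm_num)).differentiable one_ne_zero
    exact fun x => (h x).clm_apply (differentiableAt_const _)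
  have e1 : pd i (pd j (d2 i k)) q = 0 := by
    rw [pd_swap _ (hsmooth2 i k)]
    have : pd i (d2 i k) = fun _ => (0 : ℝ) := funext (h2a i k hik)
    rw [this]
    simp [pd, fderiv_const]
  have e2 : pd i (pd k (d2 i j)) q = 0 := by
    rw [pd_swap _ (hsmooth2 i j)]
    have : pd i (d2 i j) = fun _ => (0 : ℝ) := funext (h2a i j hij)
    rw [this]
    simp [pd, fderiv_const]
  have : pd i (fun q => -(pd j (d2 i k) q) - (pd k (d2 i j) q)) q =
      -(pd i (pd j (d2 i k)) q) - pd i (pd k (d2 i j)) q := by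
    unfold pd at hd1 hd2 ⊢
    rw [fderiv_fun_sub (hd1 q).fun_neg (hd2 q), fderiv_fun_neg]
    simp
  rw [this, e1, e2]
  ring
end
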